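/- arXiv:1801.00044 — 2 statements merged into one kernel-verified Lean document; each statement's English description precedes it below -/
import Mathlib

section
/- For n ≥ 4, the identity Σ_{∅ ⊊ J ⊊ {1,...,n}} (r(J) − 1)·q^{|J|} = n·q·(1+q)^{n-2} − (1+q)^n + 1 + q^n holds, where r(J) is the number of cyclic runs of J. -/
open Finset

/-- The number of cyclic runs of `J`: maximal cyclic intervals mod `n` contained in `J`,
counted as `|{j ∈ J : j - 1 ∉ J}|` (subtraction in `Fin n`, i.e. mod `n`). Subsets of
`{1,…,n}` with their cyclic structure are modelled as subsets of `Fin n`. -/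
def cRuns (n : ℕ) [NeZero n] (J : Finset (Fin n)) : ℕ :=
  (J.filter (fun j => j - 1 ∉ J)).card

open Polynomial in
lemma sum_pow_card' {α : Type*} [DecidableEq α] (s : Finset α) :
    ∑ t ∈ s.powerset, (X : ℤ[X]) ^ t.card = (1 + X) ^ s.card := by
  have h := Finset.prod_add (fun _ : α => (X : ℤ[X])) (fun _ => 1) s
  simp only [Finset.prod_const, Finset.prod_const_one, mul_one, one_pow] at h
  rw [add_comm, ← h]

/-- For `n ≥ 4`:
`Σ_{∅ ⊊ J ⊊ {1,…,n}} (r(J) - 1)·q^{|J|} = n·q·(1+q)^{n-2} - (1+q)^n + 1 + q^n`. -/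
theorem stmt_18 (n : ℕ) (hn : 4 ≤ n) [NeZero n] :
    ∑ J ∈ (Finset.univ : Finset (Fin n)).powerset.filter
        (fun J => J ≠ ∅ ∧ J ≠ Finset.univ),
      ((cRuns n J : Polynomial ℤ) - 1) * Polynomial.X ^ J.card =
    (n : Polynomial ℤ) * Polynomial.X * (1 + Polynomial.X) ^ (n - 2) -
      (1 + Polynomial.X) ^ n + 1 + Polynomial.X ^ n := by
  classical
  set X : Polynomial ℤ := Polynomial.X with hX
  have hone : (1 : Fin n) ≠ 0 := by
    apply Fin.ne_of_val_ne
    rw [Fin.val_one', Fin.val_zero, Nat.mod_eq_of_lt (by omega)]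
    omega
  have hsub : ∀ j : Fin n, j - 1 ≠ j := by
    intro j h
    exact hone (by rwa [sub_eq_self] at h)
  set S := (Finset.univ : Finset (Fin n)).powerset.filter
      (fun J => J ≠ ∅ ∧ J ≠ Finset.univ) with hSdef
  -- Part B : sum of X^|J| over S
  have hB : ∑ J ∈ S, X ^ J.card = (1 + X) ^ n - 1 - X ^ n := by
    have hsplit := Finset.sum_filter_add_sum_filter_not
      ((Finset.univ : Finset (Fin n)).powerset)
      (fun J => J ≠ ∅ ∧ J ≠ Finset.univ) (fun J => X ^ J.card)
    have hall : ∑ J ∈ (Finset.univ : Finset (Fin n)).powerset, X ^ J.card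
        = (1 + X) ^ n := by
      rw [sum_pow_card', Finset.card_univ, Fintype.card_fin]
    have hnot : (Finset.univ : Finset (Fin n)).powerset.filter
        (fun J => ¬(J ≠ ∅ ∧ J ≠ Finset.univ)) = {∅, Finset.univ} := by
      ext J
      simp only [Finset.mem_filter, Finset.mem_powerset, Finset.mem_insert,
        Finset.mem_singleton, not_and_or, not_not]
      constructor
      · rintro ⟨-, h | h⟩ <;> tauto
      · rintro (rfl | rfl) <;> simp
    have hne : (∅ : Finset (Fin n)) ≠ Finset.univ := fun h => by
      have := h ▸ Finset.mem_univ (0 : Fin n)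
      simp at this
    rw [hnot] at hsplit
    rw [Finset.sum_pair hne] at hsplit
    simp only [Finset.card_empty, pow_zero, Finset.card_univ, Fintype.card_fin] at hsplit
    rw [hall] at hsplit
    have : ∑ J ∈ S, X ^ J.card + (1 + X ^ n) = (1 + X) ^ n := hsplit
    linear_combination this
  -- Part A : sum of cRuns * X^|J| over S
  have hA : ∑ J ∈ S, (cRuns n J : Polynomial ℤ) * X ^ J.card
      = (n : Polynomial ℤ) * X * (1 + X) ^ (n - 2) := by
    have expand : ∀ J : Finset (Fin n), (cRuns n J : Polynomial ℤ)
        = ∑ j : Fin n, if j ∈ J ∧ j - 1 ∉ J then 1 else 0 := by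
      intro J
      have : cRuns n J = (Finset.univ.filter (fun j => j ∈ J ∧ j - 1 ∉ J)).card := by
        rw [cRuns]
        congr 1
        ext j
        simp [Finset.mem_filter]
      rw [this, Finset.card_filter]
      push_cast
      rfl
    calc ∑ J ∈ S, (cRuns n J : Polynomial ℤ) * X ^ J.card
        = ∑ J ∈ S, ∑ j : Fin n, (if j ∈ J ∧ j - 1 ∉ J then X ^ J.card else 0) := by
          refine Finset.sum_congr rfl fun J _ => ?_
          rw [expand, Finset.sum_mul]
          refine Finset.sum_congr rfl fun j _ => ?_
          split <;> simp
      _ = ∑ j : Fin n, ∑ J ∈ S, (if j ∈ J ∧ j - 1 ∉ J then X ^ J.card else 0) :=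
          Finset.sum_comm
      _ = ∑ j : Fin n, X * (1 + X) ^ (n - 2) := by
          refine Finset.sum_congr rfl fun j _ => ?_
          rw [← Finset.sum_filter]
          have hfil : S.filter (fun J => j ∈ J ∧ j - 1 ∉ J)
              = ((Finset.univ.erase j).erase (j - 1)).powerset.image (insert j) := by
            ext J
            simp only [hSdef, Finset.mem_filter, Finset.mem_powerset, Finset.mem_image]
            constructor
            · rintro ⟨⟨-, -, -⟩, hj, hj1⟩
              refine ⟨J.erase j, ?_, ?_⟩
              · intro x hx
                rw [Finset.mem_erase] at hx ⊢
                rw [Finset.mem_erase]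
                exact ⟨fun h => hj1 (h ▸ hx.2), hx.1, Finset.mem_univ x⟩
              · rw [Finset.insert_erase hj]
            · rintro ⟨K, hK, rfl⟩
              have hjK : j ∉ K := fun h => ((Finset.mem_erase.1 (hK h)).2 |>
                Finset.mem_erase.1 |>.1) rfl
              have hj1K : j - 1 ∉ K := fun h => (Finset.mem_erase.1 (hK h)).1 rfl
              refine ⟨⟨Finset.subset_univ _, ?_, ?_⟩, Finset.mem_insert_self _ _, ?_⟩
              · exact Finset.insert_ne_empty _ _
              · intro h
                have : j - 1 ∈ insert j K := h ▸ Finset.mem_univ _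
                rcases Finset.mem_insert.1 this with h' | h'
                · exact hsub j h'
                · exact hj1K h'
              · intro h
                rcases Finset.mem_insert.1 h with h' | h'
                · exact hsub j h'
                · exact hj1K h'
          rw [hfil]
          rw [Finset.sum_image (by
            intro K1 h1 K2 h2 hins
            rw [Finset.mem_coe, Finset.mem_powerset] at h1 h2
            have hj1 : j ∉ K1 := fun h => Finset.notMem_erase j _ (Finset.mem_of_mem_erase (h1 h))
            have hj2 : j ∉ K2 := fun h => Finset.notMem_erase j _ (Finset.mem_of_mem_erase (h2 h))
            rw [← Finset.erase_insert hj1, ← Finset.erase_insert hj2, hins])]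
          have hcard : ((Finset.univ.erase j).erase (j - 1)).card = n - 2 := by
            rw [Finset.card_erase_of_mem (Finset.mem_erase.2 ⟨hsub j, Finset.mem_univ _⟩),
              Finset.card_erase_of_mem (Finset.mem_univ _), Finset.card_univ,
              Fintype.card_fin]
            omega
          calc ∑ K ∈ ((Finset.univ.erase j).erase (j - 1)).powerset, X ^ (insert j K).card
              = ∑ K ∈ ((Finset.univ.erase j).erase (j - 1)).powerset, X * X ^ K.card := by
                refine Finset.sum_congr rfl fun K hK => ?_
                rw [Finset.mem_powerset] at hK
                have hjK : j ∉ K := fun h =>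
                  Finset.notMem_erase j _ (Finset.mem_of_mem_erase (hK h))
                rw [Finset.card_insert_of_notMem hjK, pow_succ, mul_comm]
            _ = X * (1 + X) ^ (n - 2) := by
                rw [← Finset.mul_sum, sum_pow_card', hcard]
      _ = (n : Polynomial ℤ) * X * (1 + X) ^ (n - 2) := by
          rw [Finset.sum_const, Finset.card_univ, Fintype.card_fin, nsmul_eq_mul,
            mul_assoc]
  calc ∑ J ∈ S, ((cRuns n J : Polynomial ℤ) - 1) * X ^ J.card
      = ∑ J ∈ S, (cRuns n J : Polynomial ℤ) * X ^ J.card - ∑ J ∈ S, X ^ J.card := by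
        rw [← Finset.sum_sub_distrib]
        exact Finset.sum_congr rfl fun J _ => by ring
    _ = (n : Polynomial ℤ) * X * (1 + X) ^ (n - 2) - (1 + X) ^ n + 1 + X ^ n := by
        rw [hA, hB]; ring
end

section
/- The sum Σ_{d=0}^{n_1} C(n_1, d)·C(n_2, d)·q^d equals Σ_{k=0}^{n_1} C(n_2, k)·C(n−k, n_2)·(q−1)^k, for any nonnegative integers n_1 ≤ n_2 with n_1 + n_2 = n. -/
lemma key19 (n₁ n₂ j : ℕ) (hj : j ≤ n₁) (h12 : n₁ ≤ n₂) :
    ∑ d ∈ Finset.range (n₁ + 1), n₁.choose d * n₂.choose d * d.choose j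
      = n₂.choose j * (n₁ + n₂ - j).choose n₂ := by
  rw [show Finset.range (n₁ + 1) = Finset.Ico 0 (n₁ + 1) by rw [Finset.range_eq_Ico]]
  rw [← Finset.sum_Ico_consecutive _ (Nat.zero_le j) (by omega : j ≤ n₁ + 1)]
  have h0 : ∑ d ∈ Finset.Ico 0 j, n₁.choose d * n₂.choose d * d.choose j = 0 := by
    apply Finset.sum_eq_zero
    intro d hd
    simp only [Finset.mem_Ico] at hd
    rw [Nat.choose_eq_zero_of_lt hd.2, mul_zero]
  rw [h0, zero_add, Finset.sum_Ico_eq_sum_range]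
  have hrange : n₁ + 1 - j = (n₁ - j) + 1 := by omega
  rw [hrange]
  have step : ∀ e ∈ Finset.range (n₁ - j + 1),
      n₁.choose (j + e) * n₂.choose (j + e) * (j + e).choose j
        = n₂.choose j * (n₁.choose (n₁ - j - e) * (n₂ - j).choose e) := by
    intro e he
    simp only [Finset.mem_range] at he
    have h1 : j + e ≤ n₂ := by omega
    have h2 : j ≤ j + e := Nat.le_add_right _ _
    rw [mul_assoc, Nat.choose_mul (n := n₂) h2, Nat.add_sub_cancel_left,
      ← Nat.choose_symm (show j + e ≤ n₁ by omega)]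
    have : n₁ - (j + e) = n₁ - j - e := by omega
    rw [this]; ring
  rw [Finset.sum_congr rfl step, ← Finset.mul_sum]
  congr 1
  have step2 : ∀ e ∈ Finset.range (n₁ - j + 1),
      n₁.choose (n₁ - j - e) * (n₂ - j).choose e
        = n₁.choose (n₁ - j + 1 - 1 - e) * (n₂ - j).choose (n₁ - j - (n₁ - j + 1 - 1 - e)) := by
    intro e he
    simp only [Finset.mem_range] at he
    congr 2 <;> omega
  rw [Finset.sum_congr rfl step2,
    Finset.sum_range_reflect (fun i => n₁.choose i * (n₂ - j).choose (n₁ - j - i)) (n₁ - j + 1)]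
  have hv := Nat.add_choose_eq n₁ (n₂ - j) (n₁ - j)
  rw [Finset.Nat.sum_antidiagonal_eq_sum_range_succ_mk] at hv
  rw [← hv, show n₁ + (n₂ - j) = n₁ + n₂ - j by omega,
    Nat.choose_symm_of_eq_add (show n₁ + n₂ - j = n₂ + (n₁ - j) by omega)]

lemma expand19 (d : ℕ) : (Polynomial.X : Polynomial ℤ) ^ d
    = ∑ k ∈ Finset.range (d + 1), (d.choose k : Polynomial ℤ) * (Polynomial.X - 1) ^ k := by
  conv_lhs => rw [show (Polynomial.X : Polynomial ℤ) = (Polynomial.X - 1) + 1 by ring]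
  rw [add_pow]
  exact Finset.sum_congr rfl fun k _ => by ring

/-- For nonnegative integers `n₁ ≤ n₂` with `n₁ + n₂ = n`, the polynomial identity
`Σ_{d=0}^{n₁} C(n₁,d)·C(n₂,d)·q^d = Σ_{k=0}^{n₁} C(n₂,k)·C(n-k,n₂)·(q-1)^k`. -/
theorem stmt_19 (n n₁ n₂ : ℕ) (h12 : n₁ ≤ n₂) (hsum : n₁ + n₂ = n) :
    ∑ d ∈ Finset.range (n₁ + 1),
        ((n₁.choose d * n₂.choose d : ℕ) : Polynomial ℤ) * Polynomial.X ^ d =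
    ∑ k ∈ Finset.range (n₁ + 1),
        ((n₂.choose k * (n - k).choose n₂ : ℕ) : Polynomial ℤ) *
          (Polynomial.X - 1) ^ k := by
  subst hsum
  calc
    ∑ d ∈ Finset.range (n₁ + 1),
        ((n₁.choose d * n₂.choose d : ℕ) : Polynomial ℤ) * Polynomial.X ^ d
      = ∑ d ∈ Finset.range (n₁ + 1), ∑ k ∈ Finset.range (n₁ + 1),
          ((n₁.choose d * n₂.choose d * d.choose k : ℕ) : Polynomial ℤ) *
            (Polynomial.X - 1) ^ k := by
        refine Finset.sum_congr rfl fun d hd => ?_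
        simp only [Finset.mem_range] at hd
        rw [expand19, Finset.mul_sum,
          Finset.sum_subset (Finset.range_subset_range.mpr (by omega : d + 1 ≤ n₁ + 1))
            (fun k _ hk => by
              simp only [Finset.mem_range, not_lt] at hk
              rw [Nat.choose_eq_zero_of_lt (show d < k by omega)]
              push_cast; ring)]
        exact Finset.sum_congr rfl fun k _ => by push_cast; ring
    _ = ∑ k ∈ Finset.range (n₁ + 1),
          ((n₂.choose k * (n₁ + n₂ - k).choose n₂ : ℕ) : Polynomial ℤ) *
            (Polynomial.X - 1) ^ k := by
        rw [Finset.sum_comm]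
        refine Finset.sum_congr rfl fun k hk => ?_
        simp only [Finset.mem_range] at hk
        rw [← Finset.sum_mul, ← Nat.cast_sum, key19 n₁ n₂ k (by omega) h12]
end
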